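/- For a communication situation (N, v, Γ) and a coalition S not contained in a single connected component of Γ, the Myerson interaction index vanishes: MI^{v,Γ}(S) = SI^{v^Γ}(S) = 0. -/

import Mathlib

/-!
Every coalition `T ⊇ S` is disconnected, so it splits as `C ∪ (T \ C)` with `C` a component of
the graph induced on `T`. No edge joins `C` to `T \ C`, hence on subsets of `T` the restricted game
is the sum of a game that ignores the players outside `C` and one that ignores those in `C`.
Each summand has a null player in `T`, so the Harsanyi dividend of `T` vanishes, and with it
every term of the Shapley interaction index.
-/

open Finset

noncomputable section
open scoped Classical

namespace TUGame

variable {ι : Type*} [Fintype ι] [DecidableEq ι]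

/-- Harsanyi dividend of coalition `T` in game `v`. -/
def dividend (v : Finset ι → ℝ) (T : Finset ι) : ℝ :=
  ∑ R ∈ T.powerset, (-1 : ℝ) ^ (T.card - R.card) * v R

/-- Unanimity game of coalition `T`. -/
def unanimity (T S : Finset ι) : ℝ := if T ⊆ S then 1 else 0

/-- Shapley value of player `i` in game `v`. -/
def shapley (v : Finset ι → ℝ) (i : ι) : ℝ :=
  ∑ S ∈ Finset.univ.powerset.filter (fun S => i ∈ S),
    (((S.card - 1).factorial * (Fintype.card ι - S.card).factorial : ℕ) : ℝ) /
      (((Fintype.card ι).factorial : ℕ) : ℝ) * (v S - v (S.erase i))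

/-- Shapley interaction index, defined via discrete derivatives. -/
def SIderiv (v : Finset ι → ℝ) (S : Finset ι) : ℝ :=
  ∑ T ∈ (Finset.univ \ S).powerset,
    (((Fintype.card ι - T.card - S.card).factorial * T.card.factorial : ℕ) : ℝ) /
      (((Fintype.card ι - S.card + 1).factorial : ℕ) : ℝ) *
    ∑ L ∈ S.powerset, (-1 : ℝ) ^ (S.card - L.card) * v (T ∪ L)

/-- Shapley interaction index, expressed via Harsanyi dividends. -/
def SIdiv (v : Finset ι → ℝ) (S : Finset ι) : ℝ :=
  ∑ T ∈ Finset.univ.powerset.filter (fun T => S ⊆ T),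
    dividend v T / ((T.card - S.card + 1 : ℕ) : ℝ)

/-- The subgraph of `G` induced by the coalition `S` (as a graph on the same vertex set). -/
def restrict (G : SimpleGraph ι) (S : Finset ι) : SimpleGraph ι where
  Adj i j := G.Adj i j ∧ i ∈ S ∧ j ∈ S
  symm := ⟨fun i j h => ⟨h.1.symm, h.2.2, h.2.1⟩⟩
  loopless := ⟨fun i h => G.loopless.irrefl i h.1⟩

/-- Connected component of `i` in the subgraph induced by `S`. -/
def comp (G : SimpleGraph ι) (S : Finset ι) (i : ι) : Finset ι :=
  S.filter fun j => (restrict G S).Reachable i j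

/-- Connected component of `i` in `G`. -/
def component (G : SimpleGraph ι) (i : ι) : Finset ι := comp G Finset.univ i

/-- Myerson graph-restricted game: sum of `v` over the connected components
of the subgraph induced by `S`. -/
def restrictedGame (G : SimpleGraph ι) (v : Finset ι → ℝ) (S : Finset ι) : ℝ :=
  ∑ C ∈ S.image (comp G S), v C

/-- Myerson interaction index. -/
def MI (G : SimpleGraph ι) (v : Finset ι → ℝ) (S : Finset ι) : ℝ :=
  SIdiv (restrictedGame G v) S

/-- The subgraph induced by `S` is connected. -/
def ConnectedOn (G : SimpleGraph ι) (S : Finset ι) : Prop :=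
  ∀ i ∈ S, ∀ j ∈ S, (restrict G S).Reachable i j

/-- `R` is a minimal `T`-connecting set of nodes in `G`. -/
def MinimalConnecting (G : SimpleGraph ι) (T R : Finset ι) : Prop :=
  T ⊆ R ∧ ConnectedOn G R ∧ ∀ R' ⊂ R, ¬ (T ⊆ R' ∧ ConnectedOn G R')

/-- `i` is an intermediary of `T` in `G`. -/
def Intermediary (G : SimpleGraph ι) (T : Finset ι) (i : ι) : Prop :=
  ∃ R, MinimalConnecting G T R ∧ i ∈ R ∧ i ∉ T

/-- `i` is an essential intermediary of `T` in `G`. -/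
def EssentialIntermediary (G : SimpleGraph ι) (T : Finset ι) (i : ι) : Prop :=
  i ∉ T ∧ ∀ R, MinimalConnecting G T R → i ∈ R

/-- `i` is a null player in game `v`. -/
def NullPlayer (v : Finset ι → ℝ) (i : ι) : Prop :=
  ∀ S : Finset ι, i ∉ S → v (insert i S) = v S

/-- `i` is a graph null player in the communication situation `(N, v, G)`. -/
def GraphNull (G : SimpleGraph ι) (v : Finset ι → ℝ) (i : ι) : Prop :=
  NullPlayer v i ∧
    ∀ j k : ι, j ≠ k → j ≠ i → k ≠ i → Intermediary G {j, k} i →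
      NullPlayer v j ∨ NullPlayer v k

/-- `P` is a veto partnership in game `v`. -/
def VetoPartnership (v : Finset ι → ℝ) (P : Finset ι) : Prop :=
  P.Nonempty ∧ ∀ T : Finset ι, T ⊆ Finset.univ \ P →
    v T = 0 ∧ ∀ S ⊂ P, v (T ∪ S) = 0

/-- `GP` is a veto graph partnership in `(N, v, G)`. -/
def VetoGraphPartnership (G : SimpleGraph ι) (v : Finset ι → ℝ) (GP : Finset ι) : Prop :=
  GP.Nonempty ∧ ∃ P, VetoPartnership v P ∧
    ∀ i ∈ GP, i ∈ P ∨ EssentialIntermediary G P i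

/-- Cutnodes of `S`: nodes of `S` whose removal disconnects the induced subgraph on `S`. -/
def cutnodes (G : SimpleGraph ι) (S : Finset ι) : Finset ι :=
  S.filter fun i => ¬ ConnectedOn G (S.erase i)

end TUGame

namespace TUGame

variable {ι : Type*}

section Dividend

lemma dividend_congr {u w : Finset ι → ℝ} {T : Finset ι} (h : ∀ R ⊆ T, u R = w R) :
    dividend u T = dividend w T :=
  sum_congr rfl fun R hR => by rw [h R (mem_powerset.1 hR)]

lemma dividend_add (u w : Finset ι → ℝ) (T : Finset ι) :
    dividend (u + w) T = dividend u T + dividend w T := by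
  simp only [dividend, Pi.add_apply, mul_add, sum_add_distrib]

lemma dividend_eq_zero_of_nullPlayer [DecidableEq ι] {u : Finset ι → ℝ} {T : Finset ι} {i : ι}
    (hnull : NullPlayer u i) (hi : i ∈ T) : dividend u T = 0 := by
  have hiT' : i ∉ T.erase i := notMem_erase i T
  -- `R` and `insert i R` have the same worth but opposite signs in the dividend.
  rw [dividend, ← insert_erase hi, sum_powerset_insert hiT', ← sum_add_distrib]
  refine sum_eq_zero fun R hR => ?_
  have hRT : R.card ≤ (T.erase i).card := card_le_card (mem_powerset.1 hR)
  have hiR : i ∉ R := fun h => hiT' (mem_powerset.1 hR h)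
  rw [hnull R hiR, card_insert_of_notMem hiT', card_insert_of_notMem hiR,
    Nat.add_sub_add_right, Nat.succ_sub hRT, pow_succ]
  ring

lemma dividend_eq_zero_of_additive_split [DecidableEq ι] {w : Finset ι → ℝ} {C T : Finset ι}
    {i j : ι} (hi : i ∈ T ∩ C) (hj : j ∈ T \ C)
    (hsplit : ∀ R ⊆ T, w R = w (R ∩ C) + w (R \ C)) : dividend w T = 0 := by
  have hnull_out : NullPlayer (fun R => w (R ∩ C)) j := fun R _ => by
    simp only [insert_inter_of_notMem (mem_sdiff.1 hj).2]
  have hnull_in : NullPlayer (fun R => w (R \ C)) i := fun R _ => by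
    simp only [insert_sdiff_of_mem _ (mem_inter.1 hi).2]
  calc dividend w T = dividend ((fun R => w (R ∩ C)) + fun R => w (R \ C)) T :=
        dividend_congr hsplit
    _ = 0 := by
      rw [dividend_add, dividend_eq_zero_of_nullPlayer hnull_out (mem_sdiff.1 hj).1,
        dividend_eq_zero_of_nullPlayer hnull_in (mem_inter.1 hi).1, add_zero]

end Dividend

section Graph

variable {G : SimpleGraph ι}

lemma restrict_mono {U R : Finset ι} (h : U ⊆ R) : restrict G U ≤ restrict G R :=
  fun _ _ hij => ⟨hij.1, h hij.2.1, h hij.2.2⟩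

lemma reachable_restrict_of_closed {U R : Finset ι}
    (hcl : ∀ j ∈ U, ∀ k ∈ R, G.Adj j k → k ∈ U) {i j : ι} (p : (restrict G R).Walk i j)
    (hi : i ∈ U) : j ∈ U ∧ (restrict G U).Reachable i j := by
  induction p with
  | nil => exact ⟨hi, SimpleGraph.Reachable.refl _⟩
  | cons hadj _ ih =>
    have hnext := hcl _ hi _ hadj.2.2 hadj.1
    obtain ⟨hend, hreach⟩ := ih hnext
    exact ⟨hend, (show (restrict G U).Adj _ _ from ⟨hadj.1, hi, hnext⟩).reachable.trans hreach⟩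

variable [Fintype ι] [DecidableEq ι]

lemma mem_comp_self {R : Finset ι} {i : ι} (hi : i ∈ R) : i ∈ comp G R i :=
  mem_filter.2 ⟨hi, SimpleGraph.Reachable.refl _⟩

lemma comp_subset (R : Finset ι) (i : ι) : comp G R i ⊆ R := filter_subset _ _

lemma mem_comp_of_adj {R : Finset ι} {i j k : ι} (hj : j ∈ comp G R i) (hk : k ∈ R)
    (hadj : G.Adj j k) : k ∈ comp G R i := by
  obtain ⟨hjR, hij⟩ := mem_filter.1 hj
  exact mem_filter.2 ⟨hk, hij.trans (SimpleGraph.Adj.reachable ⟨hadj, hjR, hk⟩)⟩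

lemma comp_subset_component (R : Finset ι) (i : ι) :
    comp G R i ⊆ component G i := fun j hj =>
  mem_filter.2 ⟨mem_univ j, (mem_filter.1 hj).2.mono (restrict_mono (subset_univ R))⟩

lemma comp_eq_of_closed {U R : Finset ι} (hUR : U ⊆ R)
    (hcl : ∀ j ∈ U, ∀ k ∈ R, G.Adj j k → k ∈ U) {i : ι} (hi : i ∈ U) :
    comp G R i = comp G U i := by
  ext j
  simp only [comp, mem_filter]
  constructor
  · rintro ⟨-, ⟨p⟩⟩
    exact reachable_restrict_of_closed hcl p hi
  · rintro ⟨hjU, hij⟩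
    exact ⟨hUR hjU, hij.mono (restrict_mono hUR)⟩

lemma restrictedGame_union_of_not_adj (v : Finset ι → ℝ) {A B : Finset ι} (hAB : Disjoint A B)
    (hno : ∀ a ∈ A, ∀ b ∈ B, ¬ G.Adj a b) :
    restrictedGame G v (A ∪ B) = restrictedGame G v A + restrictedGame G v B := by
  have hclA : ∀ j ∈ A, ∀ k ∈ A ∪ B, G.Adj j k → k ∈ A := fun j hj k hk hadj =>
    (mem_union.1 hk).resolve_right fun hkB => hno j hj k hkB hadj
  have hclB : ∀ j ∈ B, ∀ k ∈ A ∪ B, G.Adj j k → k ∈ B := fun j hj k hk hadj =>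
    (mem_union.1 hk).resolve_left fun hkA => hno k hkA j hj hadj.symm
  have hcompA : A.image (comp G (A ∪ B)) = A.image (comp G A) :=
    image_congr fun _ ha => comp_eq_of_closed subset_union_left hclA ha
  have hcompB : B.image (comp G (A ∪ B)) = B.image (comp G B) :=
    image_congr fun _ hb => comp_eq_of_closed subset_union_right hclB hb
  have hdisj : Disjoint (A.image (comp G A)) (B.image (comp G B)) := by
    refine disjoint_left.2 fun D hDA hDB => ?_
    obtain ⟨a, ha, rfl⟩ := mem_image.1 hDA
    obtain ⟨b, -, hba⟩ := mem_image.1 hDB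
    have haB : a ∈ B := comp_subset B b (hba ▸ mem_comp_self ha)
    exact disjoint_left.1 hAB ha haB
  rw [restrictedGame, image_union, hcompA, hcompB, sum_union hdisj]
  rfl

end Graph

lemma dividend_restrictedGame_eq_zero [Fintype ι] [DecidableEq ι] (G : SimpleGraph ι)
    (v : Finset ι → ℝ) {T : Finset ι} (hT : ¬ ∃ i, T ⊆ component G i) :
    dividend (restrictedGame G v) T = 0 := by
  obtain rfl | ⟨s, hs⟩ := T.eq_empty_or_nonempty
  · simp [dividend, restrictedGame]
  set C := comp G T s
  obtain ⟨j, hj⟩ : (T \ C).Nonempty :=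
    sdiff_nonempty.2 fun hTC => hT ⟨s, hTC.trans (comp_subset_component T s)⟩
  refine dividend_eq_zero_of_additive_split (mem_inter.2 ⟨hs, mem_comp_self hs⟩) hj
    fun R hR => ?_
  have hno : ∀ a ∈ R ∩ C, ∀ b ∈ R \ C, ¬ G.Adj a b := fun a ha b hb hadj =>
    (mem_sdiff.1 hb).2 (mem_comp_of_adj (mem_inter.1 ha).2 (hR (mem_sdiff.1 hb).1) hadj)
  rw [← restrictedGame_union_of_not_adj v (disjoint_sdiff_inter R C).symm hno,
    show R ∩ C ∪ R \ C = R from sup_inf_sdiff R C]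

end TUGame

open TUGame

/-- the Myerson interaction index of a coalition not contained in
a single connected component of the graph vanishes. -/
theorem MI_of_disconnected {ι : Type*} [Fintype ι] [DecidableEq ι]
    (G : SimpleGraph ι) (v : Finset ι → ℝ) (S : Finset ι)
    (h : ¬ ∃ i : ι, S ⊆ component G i) :
    MI G v S = 0 := by
  refine Finset.sum_eq_zero fun T hT => ?_
  have hST : S ⊆ T := (Finset.mem_filter.1 hT).2
  rw [dividend_restrictedGame_eq_zero G v fun ⟨i, hTi⟩ => h ⟨i, hST.trans hTi⟩, zero_div]
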